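/- Let p ∈ (2,3) and let X : [0,T] → ℝ be a real-valued càdlàg path satisfying Property (RIE) relative to p and a sequence of partitions 𝒫^n with mesh tending to 0, with canonical rough path lift 𝐗 = (X,𝕏). Then: (i) 𝕏_{t−,t} = 0 for every t ∈ (0,T]; (ii) the rough path bracket [𝐗]_t := (X_t − X_0)^2 − 2𝕏_{0,t} satisfies Δ[𝐗]_t = (ΔX_t)^2 for every t ∈ (0,T], where ΔX_t := X_t − X_{t−}; (iii) [𝐗] is increasing (in particular of finite 1-variation); and (iv) Σ_{t∈(0,T]} (ΔX_t)^2 ≤ [𝐗]_T < ∞. Consequently 𝐗 satisfies all the hypotheses required to define the rough exponential of X. -/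

import Mathlib

noncomputable section

open Filter Set Topology

/-- A partition of the interval `[s, t]`: finitely many points
`s = u 0 < u 1 < ⋯ < u n = t`. -/
structure RealPartition (s t : ℝ) where
  n : ℕ
  u : Fin (n + 1) → ℝ
  mono : StrictMono u
  first : u 0 = s
  last : u (Fin.last n) = t

namespace RealPartition

variable {s t : ℝ}

/-- The sum, over the consecutive pairs of points of a partition, of a two-parameter function. -/
def psum {M : Type*} [AddCommMonoid M] (π : RealPartition s t) (f : ℝ → ℝ → M) : M :=
  ∑ i : Fin π.n, f (π.u i.castSucc) (π.u i.succ)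

/-- The mesh size of a partition. -/
def mesh (π : RealPartition s t) : ℝ :=
  ⨆ i : Fin π.n, (π.u i.succ - π.u i.castSucc)

/-- The set of points of a partition. -/
def points (π : RealPartition s t) : Set ℝ := Set.range π.u

/-- The `k`-th point of a partition (clamped at the right end). -/
def pt (π : RealPartition s t) (k : ℕ) : ℝ :=
  π.u ⟨min k π.n, Nat.lt_succ_of_le (Nat.min_le_right _ _)⟩

/-- The index of the last partition point `≤ x`. -/
def idx (π : RealPartition s t) (x : ℝ) : ℕ :=
  sSup {k : ℕ | k ≤ π.n ∧ π.pt k ≤ x}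

/-- The largest partition point `≤ x`. -/
def floorPt (π : RealPartition s t) (x : ℝ) : ℝ := π.pt (π.idx x)

end RealPartition

/-- The piecewise-constant approximation of a path along a partition (left endpoints). -/
def pcApprox {s t : ℝ} (π : RealPartition s t) {E : Type*} (X : ℝ → E) : ℝ → E :=
  fun x => X (π.floorPt x)

section Var

variable {E : Type*} [NormedAddCommGroup E]

/-- The increment `X b - X a` of a path, as a two-parameter function. -/
def incr (X : ℝ → E) : ℝ → ℝ → E := fun a b => X b - X a

/-- The `p`-variation sum of a two-parameter function along a partition. -/
def varSum (p : ℝ) (f : ℝ → ℝ → E) {s t : ℝ} (π : RealPartition s t) : ℝ :=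
  π.psum fun a b => ‖f a b‖ ^ p

/-- A two-parameter function has finite `p`-variation on `[s,t]`. -/
def FiniteVar (p : ℝ) (f : ℝ → ℝ → E) (s t : ℝ) : Prop :=
  BddAbove (Set.range fun π : RealPartition s t => varSum p f π)

/-- The `p`-variation of a two-parameter function on `[s,t]`;
for a path `X` one takes `f = incr X`. -/
def pVar (p : ℝ) (f : ℝ → ℝ → E) (s t : ℝ) : ℝ :=
  (⨆ π : RealPartition s t, varSum p f π) ^ (1 / p)

/-- `sup_{s ≤ u < t}` of the `p`-variation on `[s,u]`, i.e. `‖·‖_{p,[s,t)}`. -/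
def pVarOpen (p : ℝ) (f : ℝ → ℝ → E) (s t : ℝ) : ℝ :=
  ⨆ u : {u : ℝ // s ≤ u ∧ u < t}, pVar p f s u

/-- The supremum norm of a path on `[s,t]`. -/
def supNormOn (f : ℝ → E) (s t : ℝ) : ℝ :=
  ⨆ x : Set.Icc s t, ‖f x‖

/-- The supremum norm of a two-parameter function on the simplex over `[s,t]`. -/
def supNormOn2 (g : ℝ → ℝ → E) (s t : ℝ) : ℝ :=
  ⨆ z : {z : ℝ × ℝ // s ≤ z.1 ∧ z.1 ≤ z.2 ∧ z.2 ≤ t}, ‖g z.1.1 z.1.2‖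

end Var

section Cadlag

variable {F : Type*} [TopologicalSpace F]

/-- A path is càdlàg on `[0,T]`: right-continuous on `[0,T)` with left limits on `(0,T]`. -/
def CadlagOn (X : ℝ → F) (T : ℝ) : Prop :=
  (∀ u ∈ Set.Ico (0:ℝ) T, Tendsto X (nhdsWithin u (Set.Ioc u T)) (nhds (X u))) ∧
  (∀ u ∈ Set.Ioc (0:ℝ) T, ∃ L : F, Tendsto X (nhdsWithin u (Set.Ico 0 u)) (nhds L))

/-- The set of jump times of a path in `(0,T]`. -/
def jumpSet (X : ℝ → F) (T : ℝ) : Set ℝ :=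
  {u | u ∈ Set.Ioc 0 T ∧ ∃ L : F, Tendsto X (nhdsWithin u (Set.Iio u)) (nhds L) ∧ L ≠ X u}

end Cadlag

/-- The `j`-th standard basis vector of `ℝ^D`. -/
def bvec (D : ℕ) (j : Fin D) : Fin D → ℝ := Pi.single j 1

/-- The tensor product of two vectors. -/
def tensor {D₁ D₂ : ℕ} (x : Fin D₁ → ℝ) (y : Fin D₂ → ℝ) : Fin D₁ → Fin D₂ → ℝ :=
  fun i j => x i * y j

section Controlled

variable {D : ℕ} {E : Type*} [NormedAddCommGroup E] [NormedSpace ℝ E]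

/-- The remainder `R^Y_{s,t} = Y_t - Y_s - Y'_s X_{s,t}` of a controlled path. -/
def remainder (X : ℝ → Fin D → ℝ) (Y : ℝ → E) (Y' : ℝ → (Fin D → ℝ) →L[ℝ] E) :
    ℝ → ℝ → E :=
  fun a b => Y b - Y a - Y' a (X b - X a)

/-- `(Y, Y')` is a controlled path with respect to `X`, with respect to the exponent `p`,
on the time interval `[0,T]`. -/
structure IsControlledPath (p T : ℝ) (X : ℝ → Fin D → ℝ)
    (Y : ℝ → E) (Y' : ℝ → (Fin D → ℝ) →L[ℝ] E) : Prop where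
  cadlagY : CadlagOn Y T
  cadlagY' : CadlagOn Y' T
  finY : FiniteVar p (incr Y) 0 T
  finY' : FiniteVar p (incr Y') 0 T
  finR : FiniteVar (p / 2) (remainder X Y Y') 0 T

/-- The controlled-path norm `‖Y,Y'‖_{𝒱^p_X}`. -/
def cpNorm (p T : ℝ) (X : ℝ → Fin D → ℝ) (Y : ℝ → E) (Y' : ℝ → (Fin D → ℝ) →L[ℝ] E) : ℝ :=
  ‖Y 0‖ + ‖Y' 0‖ + pVar p (incr Y') 0 T + pVar (p / 2) (remainder X Y Y') 0 T

/-- The controlled-path distance `‖Y;Y₂‖_{𝒱^p_X,𝒱^p_{X₂}}`. -/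
def cpDist (p T : ℝ) (X X₂ : ℝ → Fin D → ℝ) (Y : ℝ → E) (Y' : ℝ → (Fin D → ℝ) →L[ℝ] E)
    (Y₂ : ℝ → E) (Y₂' : ℝ → (Fin D → ℝ) →L[ℝ] E) : ℝ :=
  ‖Y 0 - Y₂ 0‖ + ‖Y' 0 - Y₂' 0‖ + pVar p (incr fun u => Y' u - Y₂' u) 0 T
    + pVar (p / 2) (fun a b => remainder X Y Y' a b - remainder X₂ Y₂ Y₂' a b) 0 T

end Controlled

/-- `(X, XX)` is a càdlàg rough path over `ℝ^D` on `[0,T]`. -/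
structure IsRoughPath (p T : ℝ) {D : ℕ} (X : ℝ → Fin D → ℝ)
    (XX : ℝ → ℝ → Fin D → Fin D → ℝ) : Prop where
  cadlag : CadlagOn X T
  cadlagXXleft : ∀ t ∈ Set.Icc (0:ℝ) T, CadlagOn (fun s => XX s t) T
  cadlagXXright : ∀ s ∈ Set.Icc (0:ℝ) T, CadlagOn (fun t => XX s t) T
  finX : FiniteVar p (incr X) 0 T
  finXX : FiniteVar (p / 2) XX 0 T
  chen : ∀ ⦃a b c : ℝ⦄, 0 ≤ a → a ≤ b → b ≤ c → c ≤ T →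
      XX a c = XX a b + XX b c + tensor (X b - X a) (X c - X b)

/-- The rough path (semi-)norm `‖X‖_p + ‖XX‖_{p/2}`. -/
def rpNorm (p T : ℝ) {D : ℕ} (X : ℝ → Fin D → ℝ) (XX : ℝ → ℝ → Fin D → Fin D → ℝ) : ℝ :=
  pVar p (incr X) 0 T + pVar (p / 2) XX 0 T

/-- The rough path distance `‖X;X₂‖_p`. -/
def rpDist (p T : ℝ) {D : ℕ} (X : ℝ → Fin D → ℝ) (XX : ℝ → ℝ → Fin D → Fin D → ℝ)
    (X₂ : ℝ → Fin D → ℝ) (XX₂ : ℝ → ℝ → Fin D → Fin D → ℝ) : ℝ :=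
  pVar p (incr fun u => X u - X₂ u) 0 T + pVar (p / 2) (fun a b => XX a b - XX₂ a b) 0 T

section RoughIntegral

variable {D : ℕ} {E₁ E₂ : Type*} [NormedAddCommGroup E₁] [NormedSpace ℝ E₁]
  [NormedAddCommGroup E₂] [NormedSpace ℝ E₂]

/-- Compensated Riemann sum of a scalar controlled path `(F,F')` against a scalar controlled
path `(G,G')`, relative to the second-level component `XX`. -/
def compSum1 (XX : ℝ → ℝ → Fin D → Fin D → ℝ)
    (F : ℝ → ℝ) (F' : ℝ → (Fin D → ℝ) →L[ℝ] ℝ)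
    (G : ℝ → ℝ) (G' : ℝ → (Fin D → ℝ) →L[ℝ] ℝ)
    {s t : ℝ} (π : RealPartition s t) : ℝ :=
  π.psum fun a b =>
    F a * (G b - G a) + ∑ j, ∑ l, XX a b j l * (F' a (bvec D j) * G' a (bvec D l))

/-- `I` is the (scalar) rough integral `∫_s^t F dG`. -/
def IsRoughInt1 (XX : ℝ → ℝ → Fin D → Fin D → ℝ)
    (F : ℝ → ℝ) (F' : ℝ → (Fin D → ℝ) →L[ℝ] ℝ)
    (G : ℝ → ℝ) (G' : ℝ → (Fin D → ℝ) →L[ℝ] ℝ) (s t : ℝ) (I : ℝ) : Prop :=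
  ∀ π : ℕ → RealPartition s t, Tendsto (fun n => (π n).mesh) atTop (nhds 0) →
    Tendsto (fun n => compSum1 XX F F' G G' (π n)) atTop (nhds I)

/-- Compensated Riemann sum of an operator-valued controlled path `(F,F')` against a
vector-valued controlled path `(G,G')`. -/
def compSumCC (XX : ℝ → ℝ → Fin D → Fin D → ℝ)
    (F : ℝ → E₁ →L[ℝ] E₂) (F' : ℝ → (Fin D → ℝ) →L[ℝ] (E₁ →L[ℝ] E₂))
    (G : ℝ → E₁) (G' : ℝ → (Fin D → ℝ) →L[ℝ] E₁) {s t : ℝ} (π : RealPartition s t) : E₂ :=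
  π.psum fun a b =>
    F a (G b - G a) + ∑ j, ∑ l, XX a b j l • (F' a (bvec D j)) (G' a (bvec D l))

/-- `I` is the rough integral `∫_s^t F dG` of a controlled path against a controlled path. -/
def IsRoughIntCC (XX : ℝ → ℝ → Fin D → Fin D → ℝ)
    (F : ℝ → E₁ →L[ℝ] E₂) (F' : ℝ → (Fin D → ℝ) →L[ℝ] (E₁ →L[ℝ] E₂))
    (G : ℝ → E₁) (G' : ℝ → (Fin D → ℝ) →L[ℝ] E₁) (s t : ℝ) (I : E₂) : Prop :=
  ∀ π : ℕ → RealPartition s t, Tendsto (fun n => (π n).mesh) atTop (nhds 0) →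
    Tendsto (fun n => compSumCC XX F F' G G' (π n)) atTop (nhds I)

/-- Compensated Riemann sum of an operator-valued controlled path `(Y,Y')` against the rough
path `(X,XX)` itself. -/
def compSumX (X : ℝ → Fin D → ℝ) (XX : ℝ → ℝ → Fin D → Fin D → ℝ)
    (Y : ℝ → (Fin D → ℝ) →L[ℝ] E₂) (Y' : ℝ → (Fin D → ℝ) →L[ℝ] ((Fin D → ℝ) →L[ℝ] E₂))
    {s t : ℝ} (π : RealPartition s t) : E₂ :=
  π.psum fun a b =>
    Y a (X b - X a) + ∑ j, ∑ l, XX a b j l • (Y' a (bvec D j)) (bvec D l)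

/-- `I` is the rough integral `∫_s^t Y dX` of a controlled path against the rough path `(X,XX)`. -/
def IsRoughIntX (X : ℝ → Fin D → ℝ) (XX : ℝ → ℝ → Fin D → Fin D → ℝ)
    (Y : ℝ → (Fin D → ℝ) →L[ℝ] E₂) (Y' : ℝ → (Fin D → ℝ) →L[ℝ] ((Fin D → ℝ) →L[ℝ] E₂))
    (s t : ℝ) (I : E₂) : Prop :=
  ∀ π : ℕ → RealPartition s t, Tendsto (fun n => (π n).mesh) atTop (nhds 0) →
    Tendsto (fun n => compSumX X XX Y Y' (π n)) atTop (nhds I)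

/-- Compensated (tensor-valued) Riemann sums of a vector-valued controlled path against itself. -/
def compSumSelf {D₂ : ℕ} (XX : ℝ → ℝ → Fin D → Fin D → ℝ)
    (Y : ℝ → Fin D₂ → ℝ) (Y' : ℝ → (Fin D → ℝ) →L[ℝ] (Fin D₂ → ℝ))
    {s t : ℝ} (π : RealPartition s t) : Fin D₂ → Fin D₂ → ℝ :=
  π.psum fun a b => fun i k =>
    Y a i * (Y b k - Y a k) + ∑ j, ∑ l, XX a b j l * (Y' a (bvec D j) i * Y' a (bvec D l) k)

/-- `I` is the rough integral `∫_s^t Y ⊗ dY` of a controlled path against itself. -/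
def IsRoughIntSelf {D₂ : ℕ} (XX : ℝ → ℝ → Fin D → Fin D → ℝ)
    (Y : ℝ → Fin D₂ → ℝ) (Y' : ℝ → (Fin D → ℝ) →L[ℝ] (Fin D₂ → ℝ))
    (s t : ℝ) (I : Fin D₂ → Fin D₂ → ℝ) : Prop :=
  ∀ π : ℕ → RealPartition s t, Tendsto (fun n => (π n).mesh) atTop (nhds 0) →
    Tendsto (fun n => compSumSelf XX Y Y' (π n)) atTop (nhds I)

/-- `I` is the Riemann–Stieltjes integral `∫_s^t f dg` (limit of left-point Riemann sums). -/
def IsRSInt (g : ℝ → ℝ) (f : ℝ → ℝ) (s t : ℝ) (I : ℝ) : Prop :=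
  ∀ π : ℕ → RealPartition s t, Tendsto (fun n => (π n).mesh) atTop (nhds 0) →
    Tendsto (fun n => (π n).psum fun a b => f a * (g b - g a)) atTop (nhds I)

end RoughIntegral

section RIE

variable {D : ℕ}

/-- The Riemann sums `∫_0^t X^n ⊗ dX` appearing in Property (RIE). -/
def riemannProd {T : ℝ} (π : RealPartition 0 T) (X : ℝ → Fin D → ℝ) (t : ℝ) :
    Fin D → Fin D → ℝ :=
  π.psum fun a b => tensor (X a) (X (min b t) - X (min a t))

/-- A control function on `[0,T]`: nonnegative and superadditive. -/
def IsControl (w : ℝ → ℝ → ℝ) (T : ℝ) : Prop :=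
  (∀ a b : ℝ, 0 ≤ a → a ≤ b → b ≤ T → 0 ≤ w a b) ∧
  ∀ a b c : ℝ, 0 ≤ a → a ≤ b → b ≤ c → c ≤ T → w a b + w b c ≤ w a c

/-- The inequality of Property (RIE), part (iii), holds for `X` with control function `w`:
the sum of the two suprema appearing there is at most `1`. -/
def RIEControlFor (p T : ℝ) (Pseq : ℕ → RealPartition 0 T) (X : ℝ → Fin D → ℝ)
    (w : ℝ → ℝ → ℝ) : Prop :=
  ∃ a b : ℝ, 0 ≤ a ∧ 0 ≤ b ∧ a + b ≤ 1 ∧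
    (∀ s t : ℝ, 0 ≤ s → s ≤ t → t ≤ T → ‖X t - X s‖ ^ p ≤ a * w s t) ∧
    ∀ n k l : ℕ, k < l → l ≤ (Pseq n).n →
      ‖(fun i j => riemannProd (Pseq n) X ((Pseq n).pt l) i j - riemannProd (Pseq n) X ((Pseq n).pt k) i j
          - X ((Pseq n).pt k) i * (X ((Pseq n).pt l) j - X ((Pseq n).pt k) j) : Fin D → Fin D → ℝ)‖
          ^ (p / 2)
        ≤ b * w ((Pseq n).pt k) ((Pseq n).pt l)

/-- Property (RIE) for a path `X`, relative to `p` and a sequence of partitions. -/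
structure RIE (p T : ℝ) (Pseq : ℕ → RealPartition 0 T) (X : ℝ → Fin D → ℝ) : Prop where
  cadlag : CadlagOn X T
  mesh_lim : Tendsto (fun n => (Pseq n).mesh) atTop (nhds 0)
  pc_unif : TendstoUniformlyOn (fun n => pcApprox (Pseq n) X) X atTop (Set.Icc 0 T)
  riemann_unif : ∃ I : ℝ → Fin D → Fin D → ℝ,
    TendstoUniformlyOn (fun n => riemannProd (Pseq n) X) I atTop (Set.Icc 0 T)
  rie_bound : ∃ w : ℝ → ℝ → ℝ, IsControl w T ∧ RIEControlFor p T Pseq X w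

/-- The canonical second-level rough path lift `𝕏_{s,t} = ∫_s^t X ⊗ dX - X_s ⊗ X_{s,t}`
built from the limit `I t = ∫_0^t X ⊗ dX` of the Riemann sums of Property (RIE). -/
def liftOf (X : ℝ → Fin D → ℝ) (I : ℝ → Fin D → Fin D → ℝ) :
    ℝ → ℝ → Fin D → Fin D → ℝ :=
  fun s t i j => I t i j - I s i j - X s i * (X t j - X s j)

end RIE

/-- `liminf_n Pseq^n = ⋃_m ⋂_{n ≥ m} Pseq^n` of a sequence of partitions. -/
def liminfPts {T : ℝ} (Pseq : ℕ → RealPartition 0 T) : Set ℝ :=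
  ⋃ m : ℕ, ⋂ n : ℕ, ⋂ (_ : m ≤ n), (Pseq n).points

end

noncomputable section
open Filter Set Topology

/-- Remainder of a one-dimensional controlled path. -/
def remainder1 (X Y Y' : ℝ → ℝ) : ℝ → ℝ → ℝ :=
  fun a b => Y b - Y a - Y' a * (X b - X a)

/-- One-dimensional controlled path. -/
structure IsControlledPath1 (p T : ℝ) (X Y Y' : ℝ → ℝ) : Prop where
  cadlagY : CadlagOn Y T
  cadlagY' : CadlagOn Y' T
  finY : FiniteVar p (incr Y) 0 T
  finY' : FiniteVar p (incr Y') 0 T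
  finR : FiniteVar (p / 2) (remainder1 X Y Y') 0 T

/-- One-dimensional càdlàg rough path. -/
structure IsRoughPath1 (p T : ℝ) (X : ℝ → ℝ) (XX : ℝ → ℝ → ℝ) : Prop where
  cadlag : CadlagOn X T
  cadlagXXleft : ∀ t ∈ Set.Icc (0:ℝ) T, CadlagOn (fun s => XX s t) T
  cadlagXXright : ∀ s ∈ Set.Icc (0:ℝ) T, CadlagOn (fun t => XX s t) T
  finX : FiniteVar p (incr X) 0 T
  finXX : FiniteVar (p / 2) XX 0 T
  chen : ∀ ⦃a b c : ℝ⦄, 0 ≤ a → a ≤ b → b ≤ c → c ≤ T →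
      XX a c = XX a b + XX b c + (X b - X a) * (X c - X b)

/-- `I` is the rough integral `∫_s^t Y dX` of a one-dimensional controlled path `(Y,Y')`
against the one-dimensional rough path `(X,XX)`. -/
def IsRoughIntX1 (X : ℝ → ℝ) (XX : ℝ → ℝ → ℝ) (Y Y' : ℝ → ℝ) (s t : ℝ) (I : ℝ) : Prop :=
  ∀ π : ℕ → RealPartition s t, Tendsto (fun n => (π n).mesh) atTop (nhds 0) →
    Tendsto (fun n => (π n).psum fun a b => Y a * (X b - X a) + Y' a * XX a b) atTop (nhds I)

/-- The jump `ΔX_t = X_t − X_{t−}` of a real-valued path. -/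
def jump1 (X : ℝ → ℝ) (u : ℝ) : ℝ := X u - Function.leftLim X u

/-- The rough path bracket `[𝐗]_t = (X_{0,t})^2 − 2 𝕏_{0,t}`. -/
def bracket1 (X : ℝ → ℝ) (XX : ℝ → ℝ → ℝ) (t : ℝ) : ℝ := (X t - X 0) ^ 2 - 2 * XX 0 t

/-- `Σ_{0 < s ≤ t} (ΔX_s)^2`. -/
def jumpSqSum (X : ℝ → ℝ) (t : ℝ) : ℝ := ∑' u : Set.Ioc (0:ℝ) t, jump1 X u.1 ^ 2

/-- `Π_{0 < s ≤ t} (1 + ΔX_s) e^{−ΔX_s}`. -/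
def jumpProd (X : ℝ → ℝ) (t : ℝ) : ℝ :=
  ∏' u : Set.Ioc (0:ℝ) t, ((1 + jump1 X u.1) * Real.exp (-jump1 X u.1))

/-- The rough exponential `ℰ(X)_t = exp(X_t − Γ_t/2) Π_{0<s≤t} (1+ΔX_s)e^{−ΔX_s}`,
where `Γ_t = [𝐗]_t − Σ_{s≤t} (ΔX_s)^2`. -/
def roughExp (X : ℝ → ℝ) (XX : ℝ → ℝ → ℝ) (t : ℝ) : ℝ :=
  Real.exp (X t - (bracket1 X XX t - jumpSqSum X t) / 2) * jumpProd X t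

end

noncomputable section
open Filter Set Topology

/-- The Riemann sums `∫_0^t X^n dX` of Property (RIE) for a one-dimensional path. -/
def riemann1 {T : ℝ} (π : RealPartition 0 T) (X : ℝ → ℝ) (t : ℝ) : ℝ :=
  π.psum fun a b => X a * (X (min b t) - X (min a t))

/-- The inequality of Property (RIE), part (iii), for a one-dimensional path. -/
def RIEControlFor1 (p T : ℝ) (Pseq : ℕ → RealPartition 0 T) (X : ℝ → ℝ) (w : ℝ → ℝ → ℝ) : Prop :=
  ∃ a b : ℝ, 0 ≤ a ∧ 0 ≤ b ∧ a + b ≤ 1 ∧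
    (∀ s t : ℝ, 0 ≤ s → s ≤ t → t ≤ T → |X t - X s| ^ p ≤ a * w s t) ∧
    ∀ n k l : ℕ, k < l → l ≤ (Pseq n).n →
      |riemann1 (Pseq n) X ((Pseq n).pt l) - riemann1 (Pseq n) X ((Pseq n).pt k)
          - X ((Pseq n).pt k) * (X ((Pseq n).pt l) - X ((Pseq n).pt k))| ^ (p / 2)
        ≤ b * w ((Pseq n).pt k) ((Pseq n).pt l)

/-- Property (RIE) for a one-dimensional path. -/
structure RIE1 (p T : ℝ) (Pseq : ℕ → RealPartition 0 T) (X : ℝ → ℝ) : Prop where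
  cadlag : CadlagOn X T
  mesh_lim : Tendsto (fun n => (Pseq n).mesh) atTop (nhds 0)
  pc_unif : TendstoUniformlyOn (fun n => pcApprox (Pseq n) X) X atTop (Set.Icc 0 T)
  riemann_unif : ∃ I : ℝ → ℝ,
    TendstoUniformlyOn (fun n => riemann1 (Pseq n) X) I atTop (Set.Icc 0 T)
  rie_bound : ∃ w : ℝ → ℝ → ℝ, IsControl w T ∧ RIEControlFor1 p T Pseq X w

/-! Along the `n`-th partition, `Qⁿ(x) = X_x² - 2 ∫_0^x Xⁿ dX` satisfies
`Qⁿ(x) = Qⁿ(⌊x⌋ₙ) + (X_x - Xⁿ_x)²`, so it increases along the partition points, and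
`Qⁿ(t) ≥ Qⁿ(s) - (X_s - Xⁿ_s)²` for `s ≤ t`. Since `[𝐗]_t - [𝐗]_s` is the limit of
`Qⁿ(t) - Qⁿ(s)`, the bracket is increasing. If `ρₙ` is the last point of the `n`-th partition
before `t`, then `𝕏_{ρₙ,t}` is the difference of the Riemann-sum errors at `t` and at `ρₙ`, so it
tends to `0`. On the other hand `𝕏_{s,t} = ((X_{s,t})² - [𝐗]_{s,t}) / 2` has a limit as `s ↑ t`,
because `[𝐗]` is monotone and `X` is càdlàg; hence `𝕏_{t-,t} = 0` and `Δ[𝐗]_t = (ΔX_t)²`.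
Finally, the jumps of an increasing function on `[0,T]` sum to at most its total increase. -/

namespace RealPartition

variable {s t : ℝ} (π : RealPartition s t)

lemma pt_mono : Monotone π.pt := fun _ _ h =>
  π.mono.monotone (Fin.mk_le_mk.2 (min_le_min_right _ h))

lemma pt_zero : π.pt 0 = s :=
  (congrArg π.u (Fin.ext (Nat.zero_min _))).trans π.first

lemma pt_of_le {k : ℕ} (hk : π.n ≤ k) : π.pt k = t :=
  (congrArg π.u (Fin.ext (min_eq_right hk))).trans π.last

lemma pt_castSucc (i : Fin π.n) : π.pt i = π.u i.castSucc :=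
  congrArg π.u (Fin.ext (min_eq_left i.2.le))

lemma pt_succ (i : Fin π.n) : π.pt (i + 1) = π.u i.succ :=
  congrArg π.u (Fin.ext (min_eq_left i.2))

lemma u_mem_Icc (i : Fin (π.n + 1)) : π.u i ∈ Icc s t :=
  ⟨π.first.symm.le.trans (π.mono.monotone (Fin.zero_le i)),
    (π.mono.monotone (Fin.le_last i)).trans π.last.le⟩

lemma pt_mem_Icc (k : ℕ) : π.pt k ∈ Icc s t := π.u_mem_Icc _

lemma left_le_right (π : RealPartition s t) : s ≤ t :=
  (π.u_mem_Icc 0).1.trans (π.u_mem_Icc 0).2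

lemma pt_succ_sub_pt_le_mesh (i : Fin π.n) : π.pt (i + 1) - π.pt i ≤ π.mesh := by
  rw [π.pt_succ, π.pt_castSucc]
  exact le_ciSup (f := fun i : Fin π.n => π.u i.succ - π.u i.castSucc)
    (Set.finite_range _).bddAbove i

lemma psum_sub (G : ℝ → ℝ) : π.psum (fun a b => G b - G a) = G t - G s := by
  simp only [psum, ← π.pt_succ, ← π.pt_castSucc]
  rw [Fin.sum_univ_eq_sum_range (fun k => G (π.pt (k + 1)) - G (π.pt k)),
    Finset.sum_range_sub (fun k => G (π.pt k)), π.pt_of_le le_rfl, π.pt_zero]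

lemma exists_pt_lt_le {x : ℝ} (hsx : s < x) (hxt : x ≤ t) :
    ∃ i : Fin π.n, π.pt i < x ∧ x ≤ π.pt (i + 1) := by
  classical
  have hex : ∃ m, x ≤ π.pt m := ⟨π.n, (π.pt_of_le le_rfl).symm ▸ hxt⟩
  obtain ⟨k, hk⟩ : ∃ k, Nat.find hex = k + 1 := Nat.exists_eq_succ_of_ne_zero fun h => by
    have := Nat.find_spec hex
    rw [h, π.pt_zero] at this
    linarith
  have hlt : π.pt k < x := not_le.1 (Nat.find_min hex (by omega))
  have hkn : k < π.n := by
    by_contra! h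
    rw [π.pt_of_le h] at hlt
    linarith
  exact ⟨⟨k, hkn⟩, hlt, hk ▸ Nat.find_spec hex⟩

lemma idx_bddAbove (x : ℝ) : BddAbove {k : ℕ | k ≤ π.n ∧ π.pt k ≤ x} := ⟨π.n, fun _ hk => hk.1⟩

lemma idx_mem {x : ℝ} (hx : s ≤ x) : π.idx x ≤ π.n ∧ π.pt (π.idx x) ≤ x :=
  Nat.sSup_mem (s := {k : ℕ | k ≤ π.n ∧ π.pt k ≤ x}) ⟨0, Nat.zero_le _, π.pt_zero.le.trans hx⟩
    (π.idx_bddAbove x)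

lemma floorPt_le {x : ℝ} (hx : s ≤ x) : π.floorPt x ≤ x := (π.idx_mem hx).2

lemma le_pt_idx_succ {x : ℝ} (hxt : x ≤ t) : x ≤ π.pt (π.idx x + 1) := by
  rcases le_or_gt (π.idx x + 1) π.n with h | h
  · by_contra! hc
    have : π.idx x + 1 ≤ π.idx x := le_csSup (π.idx_bddAbove x) ⟨h, hc.le⟩
    omega
  · rwa [π.pt_of_le h.le]

lemma idx_mono {x y : ℝ} (hx : s ≤ x) (hxy : x ≤ y) : π.idx x ≤ π.idx y :=
  le_csSup (π.idx_bddAbove y) ⟨(π.idx_mem hx).1, (π.idx_mem hx).2.trans hxy⟩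

end RealPartition

def riemannBracket {T : ℝ} (π : RealPartition 0 T) (X : ℝ → ℝ) (x : ℝ) : ℝ :=
  X x ^ 2 - 2 * riemann1 π X x

namespace RealPartition

variable {T : ℝ} (π : RealPartition 0 T) (X : ℝ → ℝ)

lemma riemann1_eq_add (k : ℕ) {x : ℝ} (h₁ : π.pt k ≤ x) (h₂ : x ≤ π.pt (k + 1)) :
    riemann1 π X x = riemann1 π X (π.pt k) + X (π.pt k) * (X x - X (π.pt k)) := by
  by_cases hk : k < π.n
  swap
  · have : x = π.pt k := le_antisymm (h₂.trans_eq ((π.pt_of_le (by omega)).trans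
      (π.pt_of_le (by omega)).symm)) h₁
    simp [this]
  set i : Fin π.n := ⟨k, hk⟩
  have hi₀ : π.u i.castSucc = π.pt k := (π.pt_castSucc i).symm
  have hi₁ : π.u i.succ = π.pt (k + 1) := (π.pt_succ i).symm
  rw [← sub_eq_iff_eq_add', riemann1, riemann1, psum, psum, ← Finset.sum_sub_distrib,
    Finset.sum_eq_single i]
  · rw [hi₀, hi₁, min_eq_right h₂, min_eq_left h₁, min_eq_right (π.pt_mono k.le_succ), min_self]
    ring
  · intro j _ hji
    rcases lt_or_gt_of_ne hji with hj | hj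
    · have : π.u j.succ ≤ π.pt k := hi₀ ▸ π.mono.monotone (Fin.succ_le_castSucc_iff.2 hj)
      have hja : π.u j.castSucc ≤ π.pt k := (π.mono.monotone (Fin.castSucc_le_succ j)).trans this
      rw [min_eq_left (this.trans h₁), min_eq_left (hja.trans h₁), min_eq_left this,
        min_eq_left hja, sub_self]
    · have : π.pt (k + 1) ≤ π.u j.castSucc := hi₁ ▸ π.mono.monotone (Fin.succ_le_castSucc_iff.2 hj)
      have hjb : π.pt (k + 1) ≤ π.u j.succ := this.trans (π.mono.monotone (Fin.castSucc_le_succ j))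
      rw [min_eq_right (h₂.trans this), min_eq_right (h₂.trans hjb),
        min_eq_right (h₁.trans (h₂.trans this)), min_eq_right (h₁.trans (h₂.trans hjb))]
      ring
  · simp

lemma riemannBracket_eq_add (k : ℕ) {x : ℝ} (h₁ : π.pt k ≤ x) (h₂ : x ≤ π.pt (k + 1)) :
    riemannBracket π X x = riemannBracket π X (π.pt k) + (X x - X (π.pt k)) ^ 2 := by
  simp only [riemannBracket, π.riemann1_eq_add X k h₁ h₂]
  ring

lemma monotone_riemannBracket_pt : Monotone fun k => riemannBracket π X (π.pt k) :=
  monotone_nat_of_le_succ fun k => by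
    rw [π.riemannBracket_eq_add X k (π.pt_mono k.le_succ) le_rfl]
    exact le_add_of_nonneg_right (sq_nonneg _)

lemma riemannBracket_eq_floorPt {x : ℝ} (hx : 0 ≤ x) (hxT : x ≤ T) :
    riemannBracket π X x = riemannBracket π X (π.floorPt x) + (X x - pcApprox π X x) ^ 2 :=
  π.riemannBracket_eq_add X (π.idx x) (π.floorPt_le hx) (π.le_pt_idx_succ hxT)

lemma riemannBracket_sub_sq_le {s t : ℝ} (hs : 0 ≤ s) (hst : s ≤ t) (htT : t ≤ T) :
    riemannBracket π X s - (X s - pcApprox π X s) ^ 2 ≤ riemannBracket π X t := by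
  rw [π.riemannBracket_eq_floorPt X hs (hst.trans htT),
    π.riemannBracket_eq_floorPt X (hs.trans hst) htT]
  have : riemannBracket π X (π.floorPt s) ≤ riemannBracket π X (π.floorPt t) :=
    π.monotone_riemannBracket_pt X (π.idx_mono hs hst)
  linarith [sq_nonneg (X t - pcApprox π X t)]

end RealPartition

def canonicalLift1 (X I : ℝ → ℝ) : ℝ → ℝ → ℝ := fun s u => I u - I s - X s * (X u - X s)

lemma bracket1_canonicalLift1_sub (X I : ℝ → ℝ) (s t : ℝ) :
    bracket1 X (canonicalLift1 X I) t - bracket1 X (canonicalLift1 X I) s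
      = (X t - X s) ^ 2 - 2 * canonicalLift1 X I s t := by
  simp only [bracket1, canonicalLift1]
  ring

lemma bracket1_canonicalLift1_zero (X I : ℝ → ℝ) : bracket1 X (canonicalLift1 X I) 0 = 0 := by
  simp [bracket1, canonicalLift1]

lemma monotoneOn_bracket1_canonicalLift1 {T : ℝ} {Pseq : ℕ → RealPartition 0 T} {X I : ℝ → ℝ}
    (hpc : ∀ x ∈ Icc 0 T, Tendsto (fun n => pcApprox (Pseq n) X x) atTop (𝓝 (X x)))
    (hI : ∀ x ∈ Icc 0 T, Tendsto (fun n => riemann1 (Pseq n) X x) atTop (𝓝 (I x))) :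
    MonotoneOn (bracket1 X (canonicalLift1 X I)) (Icc 0 T) := by
  rintro s ⟨hs, hsT⟩ t ⟨ht, htT⟩ hst
  have hQ : ∀ x ∈ Icc 0 T,
      Tendsto (fun n => riemannBracket (Pseq n) X x) atTop (𝓝 (X x ^ 2 - 2 * I x)) :=
    fun x hx => tendsto_const_nhds.sub ((hI x hx).const_mul 2)
  have herr : Tendsto (fun n => (X s - pcApprox (Pseq n) X s) ^ 2) atTop (𝓝 0) := by
    simpa using ((tendsto_const_nhds (x := X s)).sub (hpc s ⟨hs, hsT⟩)).pow 2
  have hlim := le_of_tendsto_of_tendsto' ((hQ s ⟨hs, hsT⟩).sub herr) (hQ t ⟨ht, htT⟩)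
    fun n => (Pseq n).riemannBracket_sub_sq_le X hs hst htT
  have hB : bracket1 X (canonicalLift1 X I) t - bracket1 X (canonicalLift1 X I) s
      = X t ^ 2 - 2 * I t - (X s ^ 2 - 2 * I s) := by
    simp only [bracket1, canonicalLift1]
    ring
  linarith

lemma TendstoUniformlyOn.tendsto_sub_comp {ι α E : Type*} [SeminormedAddCommGroup E]
    {F : ι → α → E} {f : α → E} {l : Filter ι} {s : Set α} (h : TendstoUniformlyOn F f l s)
    {y : ι → α} (hy : ∀ n, y n ∈ s) : Tendsto (fun n => f (y n) - F n (y n)) l (𝓝 0) := by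
  have := tendsto_uniformity_iff_dist_tendsto_zero.1 ((tendstoUniformlyOn_iff_tendsto.1 h).comp
    (tendsto_id.prodMk (tendsto_principal.2 (Eventually.of_forall hy))))
  rw [tendsto_iff_norm_sub_tendsto_zero]
  simpa [dist_eq_norm] using this

lemma exists_tendsto_canonicalLift1 {T : ℝ} {Pseq : ℕ → RealPartition 0 T} {X I : ℝ → ℝ}
    (hmesh : Tendsto (fun n => (Pseq n).mesh) atTop (𝓝 0))
    (hI : TendstoUniformlyOn (fun n => riemann1 (Pseq n) X) I atTop (Icc 0 T))
    {t : ℝ} (ht : t ∈ Ioc 0 T) :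
    ∃ ρ : ℕ → ℝ, Tendsto ρ atTop (𝓝[<] t) ∧
      Tendsto (fun n => canonicalLift1 X I (ρ n) t) atTop (𝓝 0) := by
  choose i hi using fun n => (Pseq n).exists_pt_lt_le ht.1 ht.2
  refine ⟨fun n => (Pseq n).pt (i n),
    tendsto_nhdsWithin_iff.2 ⟨?_, Eventually.of_forall fun n => (hi n).1⟩, ?_⟩
  · refine tendsto_of_tendsto_of_tendsto_of_le_of_le (g := fun n => t - (Pseq n).mesh)
      (by simpa using tendsto_const_nhds.sub hmesh) tendsto_const_nhds (fun n => ?_)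
      fun n => (hi n).1.le
    linarith [(Pseq n).pt_succ_sub_pt_le_mesh (i n), (hi n).2]
  · have := (hI.tendsto_sub_comp (y := fun _ => t) fun _ => Ioc_subset_Icc_self ht).sub
      (hI.tendsto_sub_comp fun n => (Pseq n).pt_mem_Icc (i n))
    rw [sub_zero] at this
    refine this.congr fun n => ?_
    rw [(Pseq n).riemann1_eq_add X (i n) (hi n).1.le (hi n).2]
    simp only [canonicalLift1]
    ring

lemma tendsto_canonicalLift1_nhdsLT {T t L : ℝ} {X I : ℝ → ℝ}
    (hB : MonotoneOn (bracket1 X (canonicalLift1 X I)) (Icc 0 T)) (ht : t ∈ Ioc 0 T)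
    (hX : Tendsto X (𝓝[<] t) (𝓝 L)) {ρ : ℕ → ℝ} (hρ : Tendsto ρ atTop (𝓝[<] t))
    (hρlift : Tendsto (fun n => canonicalLift1 X I (ρ n) t) atTop (𝓝 0)) :
    Tendsto (fun s => canonicalLift1 X I s t) (𝓝[<] t) (𝓝 0) := by
  set B := bracket1 X (canonicalLift1 X I)
  have hsub : Ioo 0 t ⊆ Icc 0 T := fun x hx => ⟨hx.1.le, hx.2.le.trans ht.2⟩
  have hBlim := MonotoneOn.tendsto_nhdsWithin_Ioo_left (nonempty_Ioo.2 ht.1) (hB.mono hsub)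
    ⟨B t, by rintro _ ⟨x, hx, rfl⟩; exact hB (hsub hx) (Ioc_subset_Icc_self ht) hx.2.le⟩
  have hlim := ((((tendsto_const_nhds (x := X t)).sub hX).pow 2).sub
    ((tendsto_const_nhds (x := B t)).sub hBlim)).div_const 2
  replace hlim : Tendsto (fun s => canonicalLift1 X I s t) (𝓝[<] t) _ := hlim.congr fun s => by
    rw [bracket1_canonicalLift1_sub]
    ring
  rwa [tendsto_nhds_unique (hlim.comp hρ) hρlift] at hlim

lemma tendsto_bracket1_nhdsLT {t L : ℝ} {X I : ℝ → ℝ}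
    (hlift : Tendsto (fun s => canonicalLift1 X I s t) (𝓝[<] t) (𝓝 0))
    (hX : Tendsto X (𝓝[<] t) (𝓝 L)) :
    Tendsto (bracket1 X (canonicalLift1 X I)) (𝓝[<] t)
      (𝓝 (bracket1 X (canonicalLift1 X I) t - (X t - L) ^ 2)) := by
  have := (tendsto_const_nhds (x := bracket1 X (canonicalLift1 X I) t)).sub
    ((((tendsto_const_nhds (x := X t)).sub hX).pow 2).sub (hlift.const_mul 2))
  rw [mul_zero, sub_zero] at this
  refine this.congr fun s => ?_
  rw [← bracket1_canonicalLift1_sub]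
  ring

lemma CadlagOn.tendsto_leftLim {F : Type*} [TopologicalSpace F] [T2Space F] {X : ℝ → F}
    {T u : ℝ} (hX : CadlagOn X T) (hu : u ∈ Ioc 0 T) :
    Tendsto X (𝓝[<] u) (𝓝 (Function.leftLim X u)) := by
  obtain ⟨L, hL⟩ := hX.2 u hu
  rw [nhdsWithin_Ico_eq_nhdsLT hu.1] at hL
  rwa [leftLim_eq_of_tendsto hL]

lemma MonotoneOn.le_of_tendsto_nhdsLT {f : ℝ → ℝ} {a b u v c : ℝ} (hf : MonotoneOn f (Icc a b))
    (hu : u ≤ b) (hv : v ∈ Ico a u) (hc : Tendsto f (𝓝[<] u) (𝓝 c)) : f v ≤ c :=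
  ge_of_tendsto hc <| by
    filter_upwards [Ioo_mem_nhdsLT hv.2] with s hs
    exact hf ⟨hv.1, hv.2.le.trans hu⟩ ⟨hv.1.trans hs.1.le, hs.2.le.trans hu⟩ hs.1.le

lemma MonotoneOn.sum_jumps_le {f j : ℝ → ℝ} {a b : ℝ} (hf : MonotoneOn f (Icc a b))
    (hj : ∀ u ∈ Ioc a b, Tendsto f (𝓝[<] u) (𝓝 (f u - j u))) (hab : a ≤ b) {F : Finset ℝ}
    (hF : ↑F ⊆ Ioc a b) : ∑ u ∈ F, j u ≤ f b - f a := by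
  induction F using Finset.induction_on_max generalizing b with
  | empty => simpa using hf ⟨le_rfl, hab⟩ ⟨hab, le_rfl⟩ hab
  | insert u F hlt ih =>
    rw [Finset.sum_insert fun h => lt_irrefl u (hlt u h)]
    have hu : u ∈ Ioc a b := hF (Finset.mem_insert_self u F)
    set c := (insert a F).max' (Finset.insert_nonempty a F)
    have hac : a ≤ c := Finset.le_max' _ _ (Finset.mem_insert_self a F)
    have hcu : c < u := (Finset.max'_lt_iff _ _).2 fun y hy => by
      rcases Finset.mem_insert.1 hy with rfl | hy
      exacts [hu.1, hlt y hy]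
    have hcb : c ≤ b := hcu.le.trans hu.2
    have hF' := ih (hf.mono (Icc_subset_Icc le_rfl hcb))
      (fun x hx => hj x ⟨hx.1, hx.2.trans hcb⟩) hac fun x hx =>
        ⟨(hF (Finset.mem_insert_of_mem hx)).1, Finset.le_max' _ _ (Finset.mem_insert_of_mem hx)⟩
    have hc := hf.le_of_tendsto_nhdsLT hu.2 ⟨hac, hcu⟩ (hj u hu)
    have hub := hf (Ioc_subset_Icc_self hu) ⟨hab, le_rfl⟩ hu.2
    linarith

lemma MonotoneOn.finiteVar_one_incr {f : ℝ → ℝ} {s t : ℝ} (hf : MonotoneOn f (Icc s t)) :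
    FiniteVar 1 (incr f) s t := by
  refine ⟨f t - f s, ?_⟩
  rintro _ ⟨π, rfl⟩
  refine le_of_eq ((Finset.sum_congr rfl fun i _ => ?_).trans (π.psum_sub f))
  simp only [incr, Real.rpow_one, Real.norm_eq_abs]
  rw [abs_of_nonneg (sub_nonneg.2 (hf (π.u_mem_Icc _)
    (π.u_mem_Icc _) (π.mono.monotone (Fin.castSucc_le_succ i))))]

theorem statement_19_general
    (p T : ℝ)
    (Pseq : ℕ → RealPartition 0 T) (X : ℝ → ℝ)
    (hX : RIE1 p T Pseq X)
    (I : ℝ → ℝ)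
    (hI : TendstoUniformlyOn (fun n => riemann1 (Pseq n) X) I atTop (Set.Icc 0 T)) :
    (∀ t ∈ Set.Ioc (0:ℝ) T,
      Tendsto (fun s => I t - I s - X s * (X t - X s)) (nhdsWithin t (Set.Iio t)) (nhds 0)) ∧
    (∀ t ∈ Set.Ioc (0:ℝ) T,
      bracket1 X (fun s u => I u - I s - X s * (X u - X s)) t
        - Function.leftLim (bracket1 X (fun s u => I u - I s - X s * (X u - X s))) t
        = jump1 X t ^ 2) ∧
    MonotoneOn (bracket1 X (fun s u => I u - I s - X s * (X u - X s))) (Set.Icc 0 T) ∧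
    FiniteVar 1 (incr (bracket1 X (fun s u => I u - I s - X s * (X u - X s)))) 0 T ∧
    Summable (fun u : Set.Ioc (0:ℝ) T => jump1 X u.1 ^ 2) ∧
    jumpSqSum X T ≤ bracket1 X (fun s u => I u - I s - X s * (X u - X s)) T := by
  obtain ⟨hcadlag, hmesh, hpc, -, -⟩ := hX
  have hB : MonotoneOn (bracket1 X (canonicalLift1 X I)) (Icc 0 T) :=
    monotoneOn_bracket1_canonicalLift1 (fun x hx => hpc.tendsto_at hx)
      fun x hx => hI.tendsto_at hx
  have hlift (t : ℝ) (ht : t ∈ Ioc 0 T) :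
      Tendsto (fun s => canonicalLift1 X I s t) (𝓝[<] t) (𝓝 0) := by
    obtain ⟨ρ, hρ, hρlift⟩ := exists_tendsto_canonicalLift1 hmesh hI ht
    exact tendsto_canonicalLift1_nhdsLT hB ht (hcadlag.tendsto_leftLim ht) hρ hρlift
  have hleft (t : ℝ) (ht : t ∈ Ioc 0 T) :
      Tendsto (bracket1 X (canonicalLift1 X I)) (𝓝[<] t)
        (𝓝 (bracket1 X (canonicalLift1 X I) t - jump1 X t ^ 2)) :=
    tendsto_bracket1_nhdsLT (hlift t ht) (hcadlag.tendsto_leftLim ht)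
  have hsum (F : Finset (Ioc (0:ℝ) T)) :
      ∑ u ∈ F, jump1 X u ^ 2 ≤ bracket1 X (canonicalLift1 X I) T := by
    have := hB.sum_jumps_le hleft (Pseq 0).left_le_right
      (F := F.map (Function.Embedding.subtype _)) (by simp)
    rwa [Finset.sum_map, bracket1_canonicalLift1_zero, sub_zero] at this
  have hjump (t : ℝ) (ht : t ∈ Ioc 0 T) :
      bracket1 X (canonicalLift1 X I) t - Function.leftLim (bracket1 X (canonicalLift1 X I)) t
        = jump1 X t ^ 2 := by
    rw [leftLim_eq_of_tendsto (hleft t ht), sub_sub_cancel]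
  exact ⟨hlift, hjump, hB, hB.finiteVar_one_incr, summable_of_sum_le (fun _ => sq_nonneg _) hsum,
    Real.tsum_le_of_sum_le (fun _ => sq_nonneg _) hsum⟩

/-- a one-dimensional path satisfying Property (RIE) fulfils the hypotheses
of the rough exponential: with canonical lift `XX_{s,t} = ∫_s^t X dX − X_s X_{s,t}` built
from the limit `I` of the Riemann sums, one has (i) `XX_{t−,t} = 0`; (ii) the bracket
`[𝐗]_t = (X_{0,t})^2 − 2 XX_{0,t}` has jumps `Δ[𝐗]_t = (ΔX_t)^2`; (iii) `[𝐗]` is increasing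
(hence of finite 1-variation); and (iv) `Σ_{t ∈ (0,T]} (ΔX_t)^2 ≤ [𝐗]_T < ∞`. -/
theorem statement_19
    (p T : ℝ) (hp : 2 < p ∧ p < 3) (hT : 0 < T)
    (Pseq : ℕ → RealPartition 0 T) (X : ℝ → ℝ)
    (hX : RIE1 p T Pseq X)
    (I : ℝ → ℝ)
    (hI : TendstoUniformlyOn (fun n => riemann1 (Pseq n) X) I atTop (Set.Icc 0 T)) :
    (∀ t ∈ Set.Ioc (0:ℝ) T,
      Tendsto (fun s => I t - I s - X s * (X t - X s)) (nhdsWithin t (Set.Iio t)) (nhds 0)) ∧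
    (∀ t ∈ Set.Ioc (0:ℝ) T,
      bracket1 X (fun s u => I u - I s - X s * (X u - X s)) t
        - Function.leftLim (bracket1 X (fun s u => I u - I s - X s * (X u - X s))) t
        = jump1 X t ^ 2) ∧
    MonotoneOn (bracket1 X (fun s u => I u - I s - X s * (X u - X s))) (Set.Icc 0 T) ∧
    FiniteVar 1 (incr (bracket1 X (fun s u => I u - I s - X s * (X u - X s)))) 0 T ∧
    Summable (fun u : Set.Ioc (0:ℝ) T => jump1 X u.1 ^ 2) ∧
    jumpSqSum X T ≤ bracket1 X (fun s u => I u - I s - X s * (X u - X s)) T :=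
  statement_19_general p T Pseq X hX I hI

end
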